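/- For any two Hermitian operators A and B on (ℂ²)^{⊗N}, |2^{-N} tr([A, B]²)| ≤ 4 ‖B‖² (A | P_j A), provided B is supported only on qubit j (i.e., B = B_j ⊗ 1 on the other qubits). In particular, for B a Pauli matrix on site j with ‖B‖ = 1, |2^{-N} tr([A,B]²)| ≤ 4 (A|P_j A). -/

import Mathlib

open Matrix BigOperators

abbrev QOp (N : ℕ) := Matrix (Fin N → Fin 2) (Fin N → Fin 2) ℂ

noncomputable def pauli : Fin 4 → Matrix (Fin 2) (Fin 2) ℂ
  | 0 => 1
  | 1 => !![0, 1; 1, 0]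
  | 2 => !![0, -Complex.I; Complex.I, 0]
  | 3 => !![1, 0; 0, -1]

noncomputable def pauliString {N : ℕ} (σ : Fin N → Fin 4) : QOp N :=
  fun f g => ∏ i, pauli (σ i) (f i) (g i)

noncomputable def ip {N : ℕ} (A B : QOp N) : ℂ :=
  (2 : ℂ)⁻¹ ^ N * (Aᴴ * B).trace

noncomputable def idTr {N : ℕ} (i : Fin N) (O : QOp N) : QOp N :=
  fun f g => (if f i = g i then 1 else 0) *
    ∑ b : Fin 2, O (Function.update f i b) (Function.update g i b)

noncomputable def Pj {N : ℕ} (i : Fin N) (O : QOp N) : QOp N :=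
  O - (2 : ℂ)⁻¹ • idTr i O

noncomputable def singleSite {N : ℕ} (i : Fin N) (b : Matrix (Fin 2) (Fin 2) ℂ) : QOp N :=
  fun f g => b (f i) (g i) * ∏ k ∈ Finset.univ.erase i, (if f k = g k then (1:ℂ) else 0)

noncomputable def pauliAt {N : ℕ} (i : Fin N) (A : Fin 3) : QOp N :=
  singleSite i (pauli A.succ)

noncomputable def opNorm {n : Type*} [Fintype n] [DecidableEq n] (A : Matrix n n ℂ) : ℝ :=
  ‖(Matrix.toEuclideanCLM (𝕜 := ℂ) A : EuclideanSpace ℂ n →L[ℂ] EuclideanSpace ℂ n)‖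

attribute [local instance] Matrix.linftyOpNormedRing Matrix.linftyOpNormedAlgebra

noncomputable def mexp {n : Type*} [Fintype n] [DecidableEq n] (A : Matrix n n ℂ) : Matrix n n ℂ :=
  NormedSpace.exp A

/-!
Identify qubit `j` as a tensor factor through `(Fin N → Fin 2) ≃ Fin 2 × ({k // k ≠ j} → Fin 2)`:
then `B = b ⊗ 1` and `idTr j A = 1 ⊗ tr_j A`, so `B` commutes with `idTr j A` and
`[A, B] = [P_j A, B]`. A commutator of Hermitian operators is anti-Hermitian, hence
`|tr([A, B]²)| = ‖[P_j A, B]‖_F² ≤ (2 ‖B‖ ‖P_j A‖_F)²`, by `‖X B‖_F, ‖B X‖_F ≤ ‖B‖ ‖X‖_F`.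
Finally `P_j` is the orthogonal projection for the trace inner product, so
`(A | P_j A) = 2^{-N} ‖P_j A‖_F²`.
-/

open scoped Kronecker

namespace Matrix

variable {ι R α : Type*} [Fintype ι] [DecidableEq ι]

def partialTraceFst [AddCommMonoid α] (Y : Matrix (ι × R) (ι × R) α) : Matrix R R α :=
  of fun r s => ∑ c, Y (c, r) (c, s)

lemma partialTraceFst_one_kronecker [Semiring α] (T : Matrix R R α) :
    partialTraceFst ((1 : Matrix ι ι α) ⊗ₖ T) = Fintype.card ι • T := by
  ext r s
  simp [partialTraceFst]

lemma trace_one_kronecker_mul [Fintype R] [Semiring α] (T : Matrix R R α)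
    (Y : Matrix (ι × R) (ι × R) α) :
    (((1 : Matrix ι ι α) ⊗ₖ T) * Y).trace = (T * partialTraceFst Y).trace := by
  simp only [trace, diag, mul_apply, partialTraceFst, of_apply, Fintype.sum_prod_type,
    kroneckerMap_apply, one_apply, ite_mul, one_mul, zero_mul, Finset.mul_sum]
  rw [Finset.sum_comm]
  refine Finset.sum_congr rfl fun r _ => ?_
  rw [Finset.sum_comm]
  simp [Finset.sum_comm (γ := ι)]

lemma trace_conjTranspose_mul_self_one_kronecker_partialTraceFst [Fintype R] [CommSemiring α]
    [StarRing α] (Y : Matrix (ι × R) (ι × R) α) :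
    (((1 : Matrix ι ι α) ⊗ₖ partialTraceFst Y)ᴴ * (1 ⊗ₖ partialTraceFst Y)).trace =
      Fintype.card ι * (((1 : Matrix ι ι α) ⊗ₖ partialTraceFst Y)ᴴ * Y).trace := by
  rw [conjTranspose_kronecker, conjTranspose_one, trace_one_kronecker_mul, trace_one_kronecker_mul,
    partialTraceFst_one_kronecker, Matrix.mul_smul, trace_smul, nsmul_eq_mul]

lemma trace_submatrix_equiv {m n : Type*} [Fintype m] [Fintype n] [AddCommMonoid α]
    (M : Matrix m m α) (e : n ≃ m) : (M.submatrix e e).trace = M.trace :=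
  e.sum_comp fun i => M i i

end Matrix

section Frobenius

variable {m n : Type*} [Fintype m] [Fintype n]

noncomputable def frobeniusNormSq (X : Matrix m n ℂ) : ℝ := ∑ i, ∑ k, ‖X i k‖ ^ 2

lemma frobeniusNormSq_nonneg (X : Matrix m n ℂ) : 0 ≤ frobeniusNormSq X := by
  unfold frobeniusNormSq
  positivity

lemma trace_conjTranspose_mul_self_eq_frobeniusNormSq (X : Matrix m n ℂ) :
    (Xᴴ * X).trace = frobeniusNormSq X := by
  simp only [frobeniusNormSq, trace, diag_apply, mul_apply, conjTranspose_apply, RCLike.star_def,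
    Complex.conj_mul']
  push_cast
  exact Finset.sum_comm

lemma frobeniusNormSq_conjTranspose (X : Matrix m n ℂ) :
    frobeniusNormSq Xᴴ = frobeniusNormSq X := by
  rw [frobeniusNormSq, frobeniusNormSq, Finset.sum_comm]
  simp

lemma frobeniusNormSq_sub_le (X Y : Matrix m n ℂ) :
    frobeniusNormSq (X - Y) ≤ 2 * (frobeniusNormSq X + frobeniusNormSq Y) := by
  simp only [frobeniusNormSq, ← Finset.sum_add_distrib, Finset.mul_sum]
  gcongr with i _ k _
  have := pow_le_pow_left₀ (norm_nonneg _) (norm_sub_le (X i k) (Y i k)) 2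
  rw [Matrix.sub_apply]
  nlinarith [sq_nonneg (‖X i k‖ - ‖Y i k‖)]

lemma norm_trace_mul_self_of_conjTranspose_eq_neg {C : Matrix n n ℂ} (hC : Cᴴ = -C) :
    ‖(C * C).trace‖ = frobeniusNormSq C := by
  have hCC : C * C = -(Cᴴ * C) := by rw [hC, neg_mul, neg_neg]
  rw [hCC, trace_neg, norm_neg, trace_conjTranspose_mul_self_eq_frobeniusNormSq, Complex.norm_real,
    Real.norm_of_nonneg (frobeniusNormSq_nonneg _)]

variable [DecidableEq m]

lemma opNorm_conjTranspose (B : Matrix m m ℂ) : opNorm Bᴴ = opNorm B := by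
  rw [opNorm, opNorm, ← star_eq_conjTranspose, map_star, ContinuousLinearMap.star_eq_adjoint,
    LinearIsometryEquiv.norm_map]

lemma frobeniusNormSq_mul_le_left (B : Matrix m m ℂ) (X : Matrix m n ℂ) :
    frobeniusNormSq (B * X) ≤ opNorm B ^ 2 * frobeniusNormSq X := by
  rw [frobeniusNormSq, frobeniusNormSq, Finset.sum_comm,
    Finset.sum_comm (f := fun i k => ‖X i k‖ ^ 2), Finset.mul_sum]
  gcongr with k _
  have hcol : _ ≤ opNorm B * _ :=
    (toEuclideanCLM (𝕜 := ℂ) B).le_opNorm (WithLp.toLp 2 fun i => X i k)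
  rw [toEuclideanCLM_toLp] at hcol
  have := pow_le_pow_left₀ (norm_nonneg _) hcol 2
  rw [mul_pow, EuclideanSpace.norm_sq_eq, EuclideanSpace.norm_sq_eq] at this
  simpa [mulVec, dotProduct, mul_apply] using this

lemma frobeniusNormSq_mul_le_right (X : Matrix n m ℂ) (B : Matrix m m ℂ) :
    frobeniusNormSq (X * B) ≤ opNorm B ^ 2 * frobeniusNormSq X := by
  rw [← frobeniusNormSq_conjTranspose, conjTranspose_mul, ← opNorm_conjTranspose,
    ← frobeniusNormSq_conjTranspose X]
  exact frobeniusNormSq_mul_le_left _ _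

lemma frobeniusNormSq_commutator_le (X B : Matrix m m ℂ) :
    frobeniusNormSq (X * B - B * X) ≤ 4 * opNorm B ^ 2 * frobeniusNormSq X :=
  calc frobeniusNormSq (X * B - B * X)
      ≤ 2 * (frobeniusNormSq (X * B) + frobeniusNormSq (B * X)) := frobeniusNormSq_sub_le _ _
    _ ≤ 2 * (opNorm B ^ 2 * frobeniusNormSq X + opNorm B ^ 2 * frobeniusNormSq X) := by
      gcongr
      exacts [frobeniusNormSq_mul_le_right _ _, frobeniusNormSq_mul_le_left _ _]
    _ = 4 * opNorm B ^ 2 * frobeniusNormSq X := by ring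

end Frobenius

section Site

variable {N : ℕ} (j : Fin N)

local notation "split" => Equiv.funSplitAt j (Fin 2)

lemma funSplitAt_symm_eq_update (f : Fin N → Fin 2) (c : Fin 2) :
    (split).symm (c, fun k => f k) = Function.update f j c := by
  ext k
  by_cases h : k = j
  · subst h
    simp
  · simp [h]

lemma singleSite_eq_submatrix (b : Matrix (Fin 2) (Fin 2) ℂ) :
    singleSite j b = (b ⊗ₖ (1 : Matrix ({k // k ≠ j} → Fin 2) _ ℂ)).submatrix split split := by
  ext f g
  simp only [singleSite, Finset.prod_boole, submatrix_apply, kroneckerMap_apply,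
    Equiv.funSplitAt_apply, one_apply, funext_iff, Subtype.forall, Finset.mem_erase,
    Finset.mem_univ, and_true]

lemma idTr_eq_submatrix (X : QOp N) :
    idTr j X = (1 ⊗ₖ (X.submatrix (split).symm (split).symm).partialTraceFst).submatrix
      split split := by
  ext f g
  simp only [idTr, submatrix_apply, kroneckerMap_apply, partialTraceFst, of_apply,
    Equiv.funSplitAt_apply, funSplitAt_symm_eq_update, one_apply]

lemma idTr_commute_singleSite (X : QOp N) (b : Matrix (Fin 2) (Fin 2) ℂ) :
    Commute (idTr j X) (singleSite j b) := by
  rw [Commute, SemiconjBy, idTr_eq_submatrix, singleSite_eq_submatrix, submatrix_mul_equiv,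
    submatrix_mul_equiv, ← mul_kronecker_mul, ← mul_kronecker_mul, one_mul, mul_one, one_mul,
    mul_one]

lemma trace_conjTranspose_idTr_mul_idTr (X : QOp N) :
    ((idTr j X)ᴴ * idTr j X).trace = 2 * ((idTr j X)ᴴ * X).trace := by
  obtain ⟨Y, rfl⟩ : ∃ Y, X = Y.submatrix split split :=
    ⟨X.submatrix (split).symm (split).symm, by simp⟩
  rw [idTr_eq_submatrix, submatrix_submatrix, Equiv.self_comp_symm, submatrix_id_id,
    conjTranspose_submatrix, submatrix_mul_equiv, submatrix_mul_equiv, trace_submatrix_equiv,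
    trace_submatrix_equiv, trace_conjTranspose_mul_self_one_kronecker_partialTraceFst]
  norm_num

lemma trace_conjTranspose_mul_Pj (X : QOp N) :
    (Xᴴ * Pj j X).trace = ((Pj j X)ᴴ * Pj j X).trace := by
  have hK : ((idTr j X)ᴴ * Pj j X).trace = 0 := by
    rw [Pj, mul_sub, Matrix.mul_smul, trace_sub, trace_smul, trace_conjTranspose_idTr_mul_idTr]
    simp
  rw [Pj, conjTranspose_sub, conjTranspose_smul, sub_mul, trace_sub, smul_mul, trace_smul,
    ← Pj, hK, smul_zero, sub_zero]

lemma commutator_singleSite_eq_commutator_Pj (A : QOp N) (b : Matrix (Fin 2) (Fin 2) ℂ) :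
    A * singleSite j b - singleSite j b * A =
      Pj j A * singleSite j b - singleSite j b * Pj j A := by
  rw [Pj, sub_mul, mul_sub, smul_mul, Matrix.mul_smul, (idTr_commute_singleSite j A b).eq]
  abel

end Site

/-- OTOC bound. If B is supported only on qubit j, then
|2^{-N} tr([A,B]²)| ≤ 4 ‖B‖² (A|P_j A). -/
theorem otoc_bound {N : ℕ} (j : Fin N) (A B : QOp N)
    (hA : A.IsHermitian) (hB : B.IsHermitian)
    (b : Matrix (Fin 2) (Fin 2) ℂ) (hsupp : B = singleSite j b) :
    ‖(2 : ℂ)⁻¹ ^ N * (((A * B - B * A) * (A * B - B * A)).trace)‖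
      ≤ 4 * opNorm B ^ 2 * (ip A (Pj j A)).re := by
  have hskew : (A * B - B * A)ᴴ = -(A * B - B * A) := by
    rw [conjTranspose_sub, conjTranspose_mul, conjTranspose_mul, hA.eq, hB.eq, neg_sub]
  have hcomm : A * B - B * A = Pj j A * B - B * Pj j A := by
    rw [hsupp, commutator_singleSite_eq_commutator_Pj]
  have hip : ip A (Pj j A) = ((2⁻¹ ^ N * frobeniusNormSq (Pj j A) : ℝ) : ℂ) := by
    rw [ip, trace_conjTranspose_mul_Pj, trace_conjTranspose_mul_self_eq_frobeniusNormSq]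
    push_cast
    ring
  calc ‖(2 : ℂ)⁻¹ ^ N * ((A * B - B * A) * (A * B - B * A)).trace‖
      = 2⁻¹ ^ N * frobeniusNormSq (A * B - B * A) := by
        rw [norm_mul, norm_trace_mul_self_of_conjTranspose_eq_neg hskew, norm_pow, norm_inv,
          Complex.norm_two]
    _ ≤ 2⁻¹ ^ N * (4 * opNorm B ^ 2 * frobeniusNormSq (Pj j A)) := by
        rw [hcomm]
        gcongr
        exact frobeniusNormSq_commutator_le _ _
    _ = 4 * opNorm B ^ 2 * (ip A (Pj j A)).re := by
        rw [hip, Complex.ofReal_re]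
        ring
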